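/- arXiv:2305.02219 — 7 statements merged into one kernel-verified Lean document; each statement's English description precedes it below -/
import Mathlib

section
/- Let E be a normed vector space, T ⊆ E, and R, R_N : E → ℝ. Let Θ* ∈ T satisfy R(Θ) ≥ R(Θ*) for all Θ ∈ T, and set T* = {Θ ∈ T : R(Θ) = R(Θ*)}. Suppose there are constants c₂ > 0 and ν > 0 with c₂ · d(Θ, T*)^ν ≤ R(Θ) − R(Θ*) for all Θ ∈ T, and a constant ε ≥ 0 with |R_N(Θ) − R(Θ)| ≤ ε for all Θ ∈ T. If Θ̂ ∈ T satisfies R_N(Θ̂) ≤ R_N(Θ) for all Θ ∈ T, then d(Θ̂, T*) ≤ (2ε/c₂)^{1/ν}. -/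
/-- Deterministic core of the pre-training lemma: if the risk `R` satisfies a
Łojasiewicz-type lower bound `c₂ d(Θ, T*)^ν ≤ R(Θ) − R(Θ*)` on `T`, and the
empirical risk `RN` is uniformly `ε`-close to `R` on `T`, then any empirical
risk minimizer `Θ̂ ∈ T` satisfies `d(Θ̂, T*) ≤ (2ε/c₂)^(1/ν)`. -/
theorem stmt_2 {E : Type*} [NormedAddCommGroup E] [NormedSpace ℝ E]
    (T : Set E) (R RN : E → ℝ) (Θstar : E)
    (hΘstar : Θstar ∈ T)
    (hmin : ∀ Θ ∈ T, R Θstar ≤ R Θ)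
    (c₂ ν : ℝ) (hc₂ : 0 < c₂) (hν : 0 < ν)
    (hloj : ∀ Θ ∈ T,
      c₂ * Metric.infDist Θ {Θ' ∈ T | R Θ' = R Θstar} ^ ν ≤ R Θ - R Θstar)
    (ε : ℝ) (hε : 0 ≤ ε)
    (hgen : ∀ Θ ∈ T, |RN Θ - R Θ| ≤ ε)
    (Θhat : E) (hΘhat : Θhat ∈ T)
    (hemp : ∀ Θ ∈ T, RN Θhat ≤ RN Θ) :
    Metric.infDist Θhat {Θ' ∈ T | R Θ' = R Θstar} ≤ (2 * ε / c₂) ^ (1 / ν) := by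
  set d := Metric.infDist Θhat {Θ' ∈ T | R Θ' = R Θstar} with hd
  have hd0 : 0 ≤ d := Metric.infDist_nonneg
  have h1 := hgen Θhat hΘhat
  have h2 := hgen Θstar hΘstar
  have h3 := hemp Θstar hΘstar
  have hgap : R Θhat - R Θstar ≤ 2 * ε := by
    have := abs_le.mp h1
    have := abs_le.mp h2
    linarith [this.1, this.2, (abs_le.mp h1).1, (abs_le.mp h1).2]
  have hloj' := hloj Θhat hΘhat
  have hdν : d ^ ν ≤ 2 * ε / c₂ := by
    rw [le_div_iff₀ hc₂]
    nlinarith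
  calc d = (d ^ ν) ^ (1 / ν) := by
        rw [← Real.rpow_mul hd0, mul_one_div, div_self hν.ne', Real.rpow_one]
    _ ≤ (2 * ε / c₂) ^ (1 / ν) :=
        Real.rpow_le_rpow (Real.rpow_nonneg hd0 _) hdν (by positivity)
end

section
/- Let E be a normed vector space, let R̃, R̂, F, G : E → ℝ, let θ̃, θ̄ ∈ E, and let c₂ > 0, ν > 1, a ≥ 0, ε ≥ 0, λ ≥ 0, C ≥ 0. Assume: (i) c₂‖θ̄ − θ̃‖^ν ≤ R̃(θ̄) − R̃(θ̃); (ii) |R̃(θ) − R̂(θ)| ≤ a for θ ∈ {θ̄, θ̃}; (iii) |F(θ) − R̂(θ)| ≤ ε for θ ∈ {θ̄, θ̃}; (iv) F(θ̄) + λG(θ̄) ≤ F(θ̃) + λG(θ̃); (v) |G(θ̃) − G(θ̄)| ≤ C‖θ̃ − θ̄‖. Then (c₂/2)·‖θ̃ − θ̄‖^ν ≤ 2ε + 2a + C₀·λ^{ν/(ν−1)}, where C₀ = ((ν−1)/ν)·C^{ν/(ν−1)}·(2/(c₂ν))^{1/(ν−1)}. -/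
/-- Deterministic core of the first part of the server lemma (Lemma 8):
combining the Łojasiewicz inequality, approximation bounds, optimality of the
group-lasso minimizer `θ̄`, and Lipschitzness of the regularizer `G` yields
`(c₂/2)‖θ̃ − θ̄‖^ν ≤ 2ε + 2a + C₀ λ^(ν/(ν−1))`. -/
theorem stmt_3 {E : Type*} [NormedAddCommGroup E] [NormedSpace ℝ E]
    (Rt Rh F G : E → ℝ) (θt θb : E)
    (c₂ ν a ε lam C : ℝ)
    (hc₂ : 0 < c₂) (hν : 1 < ν) (ha : 0 ≤ a) (hε : 0 ≤ ε)
    (hlam : 0 ≤ lam) (hC : 0 ≤ C)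
    (h1 : c₂ * ‖θb - θt‖ ^ ν ≤ Rt θb - Rt θt)
    (h2 : ∀ θ ∈ ({θb, θt} : Set E), |Rt θ - Rh θ| ≤ a)
    (h3 : ∀ θ ∈ ({θb, θt} : Set E), |F θ - Rh θ| ≤ ε)
    (h4 : F θb + lam * G θb ≤ F θt + lam * G θt)
    (h5 : |G θt - G θb| ≤ C * ‖θt - θb‖) :
    (c₂ / 2) * ‖θt - θb‖ ^ ν ≤
      2 * ε + 2 * a +
        ((ν - 1) / ν) * C ^ (ν / (ν - 1)) * (2 / (c₂ * ν)) ^ (1 / (ν - 1)) *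
          lam ^ (ν / (ν - 1)) := by
  have hν0 : (0:ℝ) < ν := lt_trans one_pos hν
  have hν1 : (0:ℝ) < ν - 1 := sub_pos.2 hν
  set r := ‖θt - θb‖ with hrdef
  have hr0 : 0 ≤ r := norm_nonneg _
  set q := ν / (ν - 1) with hqdef
  have hpq : ν.HolderConjugate q := Real.HolderConjugate.conjExponent hν
  have hq0 : 0 < q := hpq.symm.pos
  -- Step 1: chain of inequalities
  have hb2 := abs_le.1 (h2 θb (by simp))
  have ht2 := abs_le.1 (h2 θt (by simp))
  have hb3 := abs_le.1 (h3 θb (by simp))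
  have ht3 := abs_le.1 (h3 θt (by simp))
  have hG : lam * G θt - lam * G θb ≤ lam * C * r := by
    have h5' : G θt - G θb ≤ C * r := le_trans (le_abs_self _) h5
    nlinarith
  have h1' : c₂ * r ^ ν ≤ Rt θb - Rt θt := by rwa [hrdef, norm_sub_rev]
  have hchain : c₂ * r ^ ν ≤ 2 * ε + 2 * a + lam * C * r := by linarith
  -- Step 2: Young's inequality with weight δ = (c₂ ν / 2)^(1/ν)
  set x : ℝ := c₂ * ν / 2 with hxdef
  have hx0 : (0:ℝ) < x := by positivity
  set δ : ℝ := x ^ (1 / ν) with hδdef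
  have hδ0 : (0:ℝ) < δ := Real.rpow_pos_of_pos hx0 _
  have hδν : δ ^ ν = x := by
    rw [hδdef, ← Real.rpow_mul hx0.le, one_div_mul_cancel hν0.ne', Real.rpow_one]
  have hδq : δ ^ q = x ^ (1 / (ν - 1)) := by
    rw [hδdef, ← Real.rpow_mul hx0.le]
    congr 1
    rw [hqdef]
    field_simp
  have hxq0 : (0:ℝ) < x ^ (1 / (ν - 1)) := Real.rpow_pos_of_pos hx0 _
  have hy := Real.young_inequality_of_nonneg (mul_nonneg hδ0.le hr0)
    (div_nonneg (mul_nonneg hlam hC) hδ0.le) hpq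
  have e0 : lam * C * r = (δ * r) * (lam * C / δ) := by
    field_simp
  have e1 : (δ * r) ^ ν = x * r ^ ν := by
    rw [Real.mul_rpow hδ0.le hr0, hδν]
  have e2 : (lam * C / δ) ^ q = lam ^ q * C ^ q / x ^ (1 / (ν - 1)) := by
    rw [Real.div_rpow (mul_nonneg hlam hC) hδ0.le, Real.mul_rpow hlam hC, hδq]
  have hinv : (2 / (c₂ * ν)) ^ (1 / (ν - 1)) = (x ^ (1 / (ν - 1)))⁻¹ := by
    rw [← Real.inv_rpow hx0.le]
    congr 1
    rw [hxdef]
    field_simp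
  have key : lam * C * r ≤ (c₂ / 2) * r ^ ν +
      ((ν - 1) / ν) * C ^ q * (2 / (c₂ * ν)) ^ (1 / (ν - 1)) * lam ^ q := by
    rw [e0]
    refine le_trans hy ?_
    rw [e1, e2, hinv]
    have hxν : x / ν = c₂ / 2 := by rw [hxdef]; field_simp
    have h1q : 1 / q = (ν - 1) / ν := by
      rw [hqdef]
      field_simp
    apply add_le_add
    · rw [div_eq_mul_one_div, mul_comm x (r ^ ν), mul_assoc, ← div_eq_mul_one_div x ν, hxν]
      rw [mul_comm]
    · apply le_of_eq
      rw [← h1q]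
      field_simp
  linarith
end

section
/- Let E be a normed vector space, let R̃, R̂, F, K, V : E → ℝ, let θ̃, θ̄, θ' ∈ E, and let a ≥ 0, ε ≥ 0, λ > 0, C ≥ 0. Assume: (i) V(θ') = 0 and K(θ') = K(θ̃); (ii) R̃(θ') ≤ R̃(θ̄); (iii) |R̃(θ) − R̂(θ)| ≤ a for θ ∈ {θ̄, θ'}; (iv) |F(θ) − R̂(θ)| ≤ ε for θ ∈ {θ̄, θ'}; (v) F(θ̄) + λ(K(θ̄) + V(θ̄)) ≤ F(θ') + λ(K(θ') + V(θ')); (vi) |K(θ̃) − K(θ̄)| ≤ C‖θ̃ − θ̄‖. Then V(θ̄) ≤ 2ε/λ + 2a/λ + C‖θ̃ − θ̄‖. -/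
/-- Deterministic core of the second part of the server lemma (Lemma 8):
bounding the non-significant part `V(θ̄)` of the regularizer of the group-lasso
minimizer by `2ε/λ + 2a/λ + C‖θ̃ − θ̄‖`. -/
theorem stmt_4 {E : Type*} [NormedAddCommGroup E] [NormedSpace ℝ E]
    (Rt Rh F K V : E → ℝ) (θt θb θ' : E)
    (a ε lam C : ℝ)
    (ha : 0 ≤ a) (hε : 0 ≤ ε) (hlam : 0 < lam) (hC : 0 ≤ C)
    (h1V : V θ' = 0) (h1K : K θ' = K θt)
    (h2 : Rt θ' ≤ Rt θb)
    (h3 : ∀ θ ∈ ({θb, θ'} : Set E), |Rt θ - Rh θ| ≤ a)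
    (h4 : ∀ θ ∈ ({θb, θ'} : Set E), |F θ - Rh θ| ≤ ε)
    (h5 : F θb + lam * (K θb + V θb) ≤ F θ' + lam * (K θ' + V θ'))
    (h6 : |K θt - K θb| ≤ C * ‖θt - θb‖) :
    V θb ≤ 2 * ε / lam + 2 * a / lam + C * ‖θt - θb‖ := by
  have h3b := abs_sub_le_iff.mp (h3 θb (by simp))
  have h3' := abs_sub_le_iff.mp (h3 θ' (by simp))
  have h4b := abs_sub_le_iff.mp (h4 θb (by simp))
  have h4' := abs_sub_le_iff.mp (h4 θ' (by simp))
  have h6' := abs_sub_le_iff.mp h6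
  have key : lam * V θb ≤ 2 * ε + 2 * a + lam * (C * ‖θt - θb‖) := by
    nlinarith [h3b.1, h3b.2, h3'.1, h3'.2, h4b.1, h4b.2, h4'.1, h4'.2, h6'.1, h6'.2,
      mul_le_mul_of_nonneg_left h6'.1 hlam.le]
  rw [← add_div, div_add' _ _ _ hlam.ne', le_div_iff₀ hlam]
  nlinarith [key]
end

section
/- Let E be a normed vector space, let H̃, Ĥ, F, G : E → ℝ, let θ̃, θ̄ ∈ E, and let c₂ > 0, ν > 1, a ≥ 0, ε ≥ 0, λ ≥ 0, C ≥ 0. Assume: (i) H̃(θ̃) = 0 and c₂‖θ̄ − θ̃‖^ν ≤ H̃(θ̄); (ii) |H̃(θ) − Ĥ(θ)| ≤ a for θ ∈ {θ̄, θ̃}; (iii) |F(θ) − Ĥ(θ)| ≤ ε for θ ∈ {θ̄, θ̃}; (iv) F(θ̄) + λG(θ̄) ≤ F(θ̃) + λG(θ̃); (v) |G(θ̃) − G(θ̄)| ≤ C‖θ̃ − θ̄‖. Then (c₂/2)·‖θ̃ − θ̄‖^ν ≤ 2ε + 2a + C₀·λ^{ν/(ν−1)}, where C₀ = ((ν−1)/ν)·C^{ν/(ν−1)}·(2/(c₂ν))^{1/(ν−1)}.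 -/
/-- Deterministic core of the first part of the client lemma (Lemma 11):
with the proxy objective `H̃` vanishing at the optimal party parameters `θ̃` and
satisfying a Łojasiewicz inequality, approximation bounds, optimality of the
local group-lasso minimizer `θ̄`, and Lipschitzness of the regularizer `G`,
one gets `(c₂/2)‖θ̃ − θ̄‖^ν ≤ 2ε + 2a + C₀ λ^(ν/(ν−1))`. -/
theorem stmt_5 {E : Type*} [NormedAddCommGroup E] [NormedSpace ℝ E]
    (Ht Hh F G : E → ℝ) (θt θb : E)
    (c₂ ν a ε lam C : ℝ)
    (hc₂ : 0 < c₂) (hν : 1 < ν) (ha : 0 ≤ a) (hε : 0 ≤ ε)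
    (hlam : 0 ≤ lam) (hC : 0 ≤ C)
    (h1z : Ht θt = 0)
    (h1 : c₂ * ‖θb - θt‖ ^ ν ≤ Ht θb)
    (h2 : ∀ θ ∈ ({θb, θt} : Set E), |Ht θ - Hh θ| ≤ a)
    (h3 : ∀ θ ∈ ({θb, θt} : Set E), |F θ - Hh θ| ≤ ε)
    (h4 : F θb + lam * G θb ≤ F θt + lam * G θt)
    (h5 : |G θt - G θb| ≤ C * ‖θt - θb‖) :
    (c₂ / 2) * ‖θt - θb‖ ^ ν ≤
      2 * ε + 2 * a +
        ((ν - 1) / ν) * C ^ (ν / (ν - 1)) * (2 / (c₂ * ν)) ^ (1 / (ν - 1)) *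
          lam ^ (ν / (ν - 1)) := by
  set r : ℝ := ‖θt - θb‖ with hr
  have hr0 : 0 ≤ r := norm_nonneg _
  have hν0 : 0 < ν := lt_trans one_pos hν
  set q : ℝ := ν / (ν - 1) with hqdef
  have hpq : ν.HolderConjugate q := Real.HolderConjugate.conjExponent hν
  -- Step 1: c₂ r^ν ≤ 2ε + 2a + lam * C * r
  have hrev : ‖θb - θt‖ = r := by rw [hr, norm_sub_rev]
  have h2b := abs_le.1 (h2 θb (by simp))
  have h2t := abs_le.1 (h2 θt (by simp))
  have h3b := abs_le.1 (h3 θb (by simp))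
  have h3t := abs_le.1 (h3 θt (by simp))
  have h5' : G θt - G θb ≤ C * r := (abs_le.1 h5).2
  have hlamG : lam * (G θt - G θb) ≤ lam * (C * r) :=
    mul_le_mul_of_nonneg_left h5' hlam
  rw [hrev] at h1
  have step1 : c₂ * r ^ ν ≤ 2 * ε + 2 * a + lam * C * r := by
    nlinarith [h1, h2b.2, h2t.1, h3b.1, h3t.2, hlamG, h1z]
  -- Step 2: Young's inequality
  set k : ℝ := c₂ * ν / 2 with hkdef
  have hk : 0 < k := by positivity
  set x : ℝ := k ^ (1 / ν) * r with hx
  set y : ℝ := lam * C * (k⁻¹) ^ (1 / ν) with hy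
  have hx0 : 0 ≤ x := by positivity
  have hy0 : 0 ≤ y := by positivity
  have young := Real.young_inequality_of_nonneg hx0 hy0 hpq
  -- x * y = lam * C * r
  have exy : x * y = lam * C * r := by
    have : k ^ (1 / ν) * (k⁻¹) ^ (1 / ν) = 1 := by
      rw [← Real.mul_rpow hk.le (by positivity), mul_inv_cancel₀ hk.ne', Real.one_rpow]
    rw [hx, hy]; linear_combination r * lam * C * this
  -- x^ν / ν = (c₂/2) r^ν
  have ex : x ^ ν / ν = (c₂ / 2) * r ^ ν := by
    rw [hx, Real.mul_rpow (by positivity) hr0,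
      ← Real.rpow_mul hk.le, one_div_mul_cancel hν0.ne', Real.rpow_one, hkdef]
    field_simp
  -- y^q / q = ((ν-1)/ν) * C^q * k⁻¹^(1/(ν-1)) * lam^q
  have hq0 : 0 < q := hpq.symm.pos
  have eq1 : (1 / ν) * q = 1 / (ν - 1) := by
    rw [hqdef]; field_simp
  have e1q : 1 / q = (ν - 1) / ν := by
    rw [hqdef]; rw [one_div_div]
  have ey : y ^ q / q = ((ν - 1) / ν) * C ^ q * (k⁻¹) ^ (1 / (ν - 1)) * lam ^ q := by
    rw [hy, Real.mul_rpow (by positivity) (by positivity),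
      Real.mul_rpow hlam hC, ← Real.rpow_mul (by positivity), eq1,
      div_eq_mul_one_div _ q, e1q]
    ring
  have hkinv : k⁻¹ = 2 / (c₂ * ν) := by
    rw [hkdef]; field_simp
  rw [← hkinv]
  have young' : lam * C * r ≤ (c₂ / 2) * r ^ ν +
      ((ν - 1) / ν) * C ^ q * (k⁻¹) ^ (1 / (ν - 1)) * lam ^ q := by
    rw [← exy, ← ex, ← ey]; exact young
  linarith [step1, young']
end

section
/- Let E be a normed vector space, let H̃, Ĥ, F, K, V : E → ℝ, let θ̃, θ̄, θ' ∈ E, and let a ≥ 0, ε ≥ 0, λ > 0, C ≥ 0. Assume: (i) V(θ') = 0 and K(θ') = K(θ̃); (ii) H̃(θ') = 0 and H̃(θ̄) ≥ 0; (iii) |H̃(θ) − Ĥ(θ)| ≤ a for θ ∈ {θ̄, θ'}; (iv) |F(θ) − Ĥ(θ)| ≤ ε for θ ∈ {θ̄, θ'}; (v) F(θ̄) + λ(K(θ̄) + V(θ̄)) ≤ F(θ') + λ(K(θ') + V(θ')); (vi) |K(θ̃) − K(θ̄)| ≤ C‖θ̃ − θ̄‖. Then V(θ̄) ≤ 2ε/λ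 + 2a/λ + C‖θ̃ − θ̄‖. -/
/-- Deterministic core of the second part of the client lemma (Lemma 11):
bounding the non-significant part `V(θ̄)` of the regularizer of the local
group-lasso minimizer by `2ε/λ + 2a/λ + C‖θ̃ − θ̄‖`. -/
theorem stmt_6 {E : Type*} [NormedAddCommGroup E] [NormedSpace ℝ E]
    (Ht Hh F K V : E → ℝ) (θt θb θ' : E)
    (a ε lam C : ℝ)
    (ha : 0 ≤ a) (hε : 0 ≤ ε) (hlam : 0 < lam) (hC : 0 ≤ C)
    (h1V : V θ' = 0) (h1K : K θ' = K θt)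
    (h2z : Ht θ' = 0) (h2nn : 0 ≤ Ht θb)
    (h3 : ∀ θ ∈ ({θb, θ'} : Set E), |Ht θ - Hh θ| ≤ a)
    (h4 : ∀ θ ∈ ({θb, θ'} : Set E), |F θ - Hh θ| ≤ ε)
    (h5 : F θb + lam * (K θb + V θb) ≤ F θ' + lam * (K θ' + V θ'))
    (h6 : |K θt - K θb| ≤ C * ‖θt - θb‖) :
    V θb ≤ 2 * ε / lam + 2 * a / lam + C * ‖θt - θb‖ := by
  have h3b := h3 θb (by simp)
  have h3' := h3 θ' (by simp)
  have h4b := h4 θb (by simp)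
  have h4' := h4 θ' (by simp)
  rw [abs_le] at h3b h3' h4b h4' h6
  have key : lam * V θb ≤ 2 * ε + 2 * a + lam * (C * ‖θt - θb‖) := by
    nlinarith [h3b.1, h3b.2, h3'.1, h3'.2, h4b.1, h4b.2, h4'.1, h4'.2, h6.1, h6.2]
  rw [show 2 * ε / lam + 2 * a / lam + C * ‖θt - θb‖
      = (2 * ε + 2 * a + lam * (C * ‖θt - θb‖)) / lam by field_simp,
    le_div_iff₀ hlam]
  nlinarith [key]
end

section
/- Let E and F be normed vector spaces and equip E × F with the norm ‖(u, v)‖ = √(‖u‖² + ‖v‖²). Let R̃, R̂, F_N, K, V : E × F → ℝ, let θ̄ = (ū, v̄) and θ̃ = (ũ, ṽ) ∈ E × F, write θ' = (ũ, 0), and let c₂ > 0, ν > 1, a ≥ 0, ε ≥ 0, λ > 0, C ≥ 0. Assume: (i) c₂‖θ̄ − θ̃‖^ν ≤ R̃(θ̄) − R̃(θ̃); (ii) R̃(θ') = R̃(θ̃); (iii) |R̃(θ) − R̂(θ)| ≤ a and |F_N(θ) − R̂(θ)| ≤ ε for θ ∈ {θ̄, θ̃, θ'}; (iv) F_N(θ̄)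 + λ(K(θ̄) + V(θ̄)) ≤ F_N(θ) + λ(K(θ) + V(θ)) for θ ∈ {θ̃, θ'}; (v) |K(θ̃) − K(θ̄)| ≤ C‖θ̃ − θ̄‖ and |(K + V)(θ̃) − (K + V)(θ̄)| ≤ C‖θ̃ − θ̄‖; (vi) V(θ') = 0, K(θ') = K(θ̃), and ‖v̄‖ ≤ V(θ̄). Let S ⊆ E × F contain θ'. Then d(θ̄, S) ≤ (2 + C)·D + 2(ε + a)/λ, where D = ((2/c₂)·(2ε + 2a + C₀·λ^{ν/(ν−1)}))^{1/ν} and C₀ = ((ν−1)/ν)·C^{ν/(ν−1)}·(2/(c₂ν))^{1/(ν−1)}. -/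
/-- Deterministic form of Theorem 2 (embedding component selection at the
server): under the Łojasiewicz inequality, approximation bounds, optimality of
the group-lasso minimizer `θ̄ = (ū, v̄)`, Lipschitzness of the regularizer
`K + V`, and with `θ' = (ũ, 0) ∈ S`, one has
`d(θ̄, S) ≤ (2 + C) D + 2(ε + a)/λ`. -/
theorem stmt_12 {E F : Type*} [NormedAddCommGroup E] [NormedSpace ℝ E]
    [NormedAddCommGroup F] [NormedSpace ℝ F]
    (Rt Rh FN K V : WithLp 2 (E × F) → ℝ)
    (ub ut : E) (vb vt : F)
    (θb θt θ' : WithLp 2 (E × F))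
    (hθb : θb = (WithLp.equiv 2 (E × F)).symm (ub, vb))
    (hθt : θt = (WithLp.equiv 2 (E × F)).symm (ut, vt))
    (hθ' : θ' = (WithLp.equiv 2 (E × F)).symm (ut, 0))
    (c₂ ν a ε lam C : ℝ)
    (hc₂ : 0 < c₂) (hν : 1 < ν) (ha : 0 ≤ a) (hε : 0 ≤ ε)
    (hlam : 0 < lam) (hC : 0 ≤ C)
    (h1 : c₂ * ‖θb - θt‖ ^ ν ≤ Rt θb - Rt θt)
    (h2 : Rt θ' = Rt θt)
    (h3a : ∀ θ ∈ ({θb, θt, θ'} : Set (WithLp 2 (E × F))), |Rt θ - Rh θ| ≤ a)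
    (h3b : ∀ θ ∈ ({θb, θt, θ'} : Set (WithLp 2 (E × F))), |FN θ - Rh θ| ≤ ε)
    (h4 : ∀ θ ∈ ({θt, θ'} : Set (WithLp 2 (E × F))),
      FN θb + lam * (K θb + V θb) ≤ FN θ + lam * (K θ + V θ))
    (h5a : |K θt - K θb| ≤ C * ‖θt - θb‖)
    (h5b : |(K θt + V θt) - (K θb + V θb)| ≤ C * ‖θt - θb‖)
    (h6a : V θ' = 0) (h6b : K θ' = K θt) (h6c : ‖vb‖ ≤ V θb)
    (S : Set (WithLp 2 (E × F))) (hS : θ' ∈ S) :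
    Metric.infDist θb S ≤
      (2 + C) *
        ((2 / c₂) * (2 * ε + 2 * a +
          ((ν - 1) / ν) * C ^ (ν / (ν - 1)) * (2 / (c₂ * ν)) ^ (1 / (ν - 1)) *
            lam ^ (ν / (ν - 1)))) ^ (1 / ν) +
      2 * (ε + a) / lam := by
  have hν0 : (0:ℝ) < ν := lt_trans one_pos hν
  have hν0' : ν ≠ 0 := ne_of_gt hν0
  have hν1 : (0:ℝ) < ν - 1 := by linarith
  set t : ℝ := ‖θb - θt‖ with ht
  set q : ℝ := ν / (ν - 1) with hqdef
  have ht0 : 0 ≤ t := by rw [ht]; exact norm_nonneg _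
  have hpq : ν.HolderConjugate q := Real.HolderConjugate.conjExponent hν
  -- pointwise bounds
  have hRtb := abs_le.1 (h3a θb (by simp))
  have hRtt := abs_le.1 (h3a θt (by simp))
  have hRt' := abs_le.1 (h3a θ' (by simp))
  have hFb := abs_le.1 (h3b θb (by simp))
  have hF' := abs_le.1 (h3b θ' (by simp))
  have hKdiff : K θt - K θb ≤ C * t := by
    have h := (abs_le.1 h5a).2
    rw [norm_sub_rev] at h
    rw [ht]; exact h
  have hVb0 : (0:ℝ) ≤ V θb := le_trans (norm_nonneg _) h6c
  have hKV' : K θ' + V θ' = K θt := by rw [h6a, h6b]; ring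
  have h4'' : FN θb + lam * (K θb + V θb) ≤ FN θ' + lam * K θt := by
    have h := h4 θ' (by simp)
    rwa [hKV'] at h
  have hprod : lam * K θt - lam * (K θb + V θb) ≤ lam * (C * t) := by
    have h : K θt - (K θb + V θb) ≤ C * t := by linarith
    calc lam * K θt - lam * (K θb + V θb) = lam * (K θt - (K θb + V θb)) := by ring
      _ ≤ lam * (C * t) := mul_le_mul_of_nonneg_left h hlam.le
  have hprod2 : lam * K θt - lam * K θb ≤ lam * (C * t) := by
    calc lam * K θt - lam * K θb = lam * (K θt - K θb) := by ring
      _ ≤ lam * (C * t) := mul_le_mul_of_nonneg_left hKdiff hlam.le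
  have hmul : lam * (K θb + V θb) = lam * K θb + lam * V θb := mul_add lam _ _
  -- Step A : c₂ t^ν ≤ 2ε + 2a + lam C t
  have hA : c₂ * t ^ ν ≤ 2 * ε + 2 * a + lam * (C * t) := by
    linarith [hRtb.2, hFb.1, hRt'.1, hF'.2, h1, h4'', hprod, h2]
  -- Young's inequality
  set x : ℝ := (c₂ * ν / 2) ^ (1/ν) * t with hxdef
  set y : ℝ := (lam * C) * (2 / (c₂ * ν)) ^ (1/ν) with hydef
  have hcν : (0:ℝ) < c₂ * ν / 2 := by positivity
  have hcν' : (0:ℝ) < 2 / (c₂ * ν) := by positivity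
  have hx0 : 0 ≤ x := by rw [hxdef]; positivity
  have hy0 : 0 ≤ y := by rw [hydef]; positivity
  have young := Real.young_inequality_of_nonneg hx0 hy0 hpq
  have hxy : x * y = lam * (C * t) := by
    have hmul' : (c₂ * ν / 2) ^ (1/ν) * (2 / (c₂ * ν)) ^ (1/ν) = 1 := by
      rw [← Real.mul_rpow hcν.le hcν'.le]
      have h1' : (c₂ * ν / 2) * (2 / (c₂ * ν)) = 1 := by
        field_simp
      rw [h1', Real.one_rpow]
    calc x * y = (lam * (C * t)) * ((c₂ * ν / 2) ^ (1/ν) * (2 / (c₂ * ν)) ^ (1/ν)) := by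
          rw [hxdef, hydef]; ring
      _ = lam * (C * t) := by rw [hmul', mul_one]
  have hxν : x ^ ν / ν = (c₂ / 2) * t ^ ν := by
    rw [hxdef, Real.mul_rpow (Real.rpow_nonneg hcν.le _) ht0, ← Real.rpow_mul hcν.le]
    have h1' : 1/ν * ν = 1 := by field_simp
    rw [h1', Real.rpow_one]
    field_simp
  have hyq : y ^ q / q =
      ((ν - 1) / ν) * C ^ q * (2 / (c₂ * ν)) ^ (1 / (ν - 1)) * lam ^ q := by
    rw [hydef, Real.mul_rpow (by positivity) (Real.rpow_nonneg hcν'.le _)]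
    rw [Real.mul_rpow hlam.le hC, ← Real.rpow_mul hcν'.le]
    have he : 1/ν * q = 1 / (ν - 1) := by
      rw [hqdef]; field_simp
    rw [he]
    have hq0 : q ≠ 0 := by rw [hqdef]; positivity
    rw [hqdef] at hq0 ⊢
    field_simp
  clear_value x y
  -- Step C : t ≤ D
  set M : ℝ := 2 * ε + 2 * a +
      ((ν - 1) / ν) * C ^ q * (2 / (c₂ * ν)) ^ (1 / (ν - 1)) * lam ^ q with hMdef
  have hM0 : 0 ≤ M := by
    have h0 : 0 ≤ ((ν - 1) / ν) * C ^ q * (2 / (c₂ * ν)) ^ (1 / (ν - 1)) * lam ^ q := by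
      positivity
    rw [hMdef]; linarith
  clear_value q
  have htν : t ^ ν ≤ (2 / c₂) * M := by
    have h : c₂ * t ^ ν ≤ 2 * ε + 2 * a + (x ^ ν / ν + y ^ q / q) := by
      have hy' := young
      rw [hxy] at hy'
      linarith
    rw [hxν, hyq] at h
    have h2' : (c₂ / 2) * t ^ ν ≤ M := by rw [hMdef]; linarith
    calc t ^ ν = (2 / c₂) * ((c₂ / 2) * t ^ ν) := by field_simp
      _ ≤ (2 / c₂) * M := mul_le_mul_of_nonneg_left h2' (by positivity)
  set D : ℝ := ((2 / c₂) * M) ^ (1/ν) with hDdef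
  have hD0 : 0 ≤ D := by
    rw [hDdef]; exact Real.rpow_nonneg (by positivity) _
  have htD : t ≤ D := by
    have h := Real.rpow_le_rpow (Real.rpow_nonneg ht0 ν) htν (by positivity : (0:ℝ) ≤ 1/ν)
    rw [← Real.rpow_mul ht0, mul_one_div, div_self hν0', Real.rpow_one] at h
    rw [hDdef]; exact h
  clear_value D M
  -- Step D : V θb ≤ C t + 2(ε+a)/lam
  have htνpos : 0 ≤ c₂ * t ^ ν := by positivity
  have hVb : V θb ≤ C * t + 2 * (ε + a) / lam := by
    have hlamVb : lam * V θb ≤ lam * (C * t + 2 * (ε + a) / lam) := by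
      have heq : lam * (C * t + 2 * (ε + a) / lam) = lam * (C * t) + 2 * (ε + a) := by
        field_simp
      rw [heq]
      linarith [hF'.1, hFb.2, hRt'.2, hRtb.1, h4'', hprod2, hmul, h1, h2, htνpos]
    exact le_of_mul_le_mul_left hlamVb hlam
  -- Step E : combine
  have hdist : Metric.infDist θb S ≤ ‖θb - θ'‖ := by
    have h := Metric.infDist_le_dist_of_mem (x := θb) hS
    rwa [dist_eq_norm] at h
  have hsplit : ‖θb - θ'‖ ≤ ‖ub - ut‖ + ‖vb‖ := by
    have heq : θb - θ' = (WithLp.equiv 2 (E × F)).symm (ub - ut, 0)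
        + (WithLp.equiv 2 (E × F)).symm (0, vb) := by
      rw [hθb, hθ', WithLp.equiv_symm_apply, ← WithLp.toLp_sub, ← WithLp.toLp_add]
      congr 1
      rw [Prod.mk_sub_mk, Prod.mk_add_mk]
      simp
    rw [heq]
    calc ‖(WithLp.equiv 2 (E × F)).symm (ub - ut, 0)
          + (WithLp.equiv 2 (E × F)).symm (0, vb)‖
        ≤ ‖(WithLp.equiv 2 (E × F)).symm (ub - ut, 0)‖
          + ‖(WithLp.equiv 2 (E × F)).symm (0, vb)‖ := norm_add_le _ _
      _ = ‖ub - ut‖ + ‖vb‖ := by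
          rw [WithLp.equiv_symm_apply, WithLp.norm_toLp_fst, WithLp.norm_toLp_snd]
  have hfst : ‖ub - ut‖ ≤ t := by
    have heq : θb - θt = (WithLp.equiv 2 (E × F)).symm (ub - ut, vb - vt) := by
      rw [hθb, hθt, WithLp.equiv_symm_apply, ← WithLp.toLp_sub, Prod.mk_sub_mk]
    have hs : t = Real.sqrt (‖ub - ut‖ ^ 2 + ‖vb - vt‖ ^ 2) := by
      rw [ht, heq, WithLp.prod_norm_eq_of_L2]
      simp
    rw [hs]
    calc ‖ub - ut‖ = Real.sqrt (‖ub - ut‖ ^ 2) := (Real.sqrt_sq (norm_nonneg _)).symm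
      _ ≤ Real.sqrt (‖ub - ut‖ ^ 2 + ‖vb - vt‖ ^ 2) :=
          Real.sqrt_le_sqrt (le_add_of_nonneg_right (sq_nonneg _))
  clear_value t
  have hexp : (1 + C) * t = t + C * t := by ring
  have hfinal : Metric.infDist θb S ≤ (1 + C) * t + 2 * (ε + a) / lam := by
    have h := hdist.trans hsplit
    have h2' : ‖vb‖ ≤ C * t + 2 * (ε + a) / lam := h6c.trans hVb
    linarith
  have hlast : (1 + C) * t ≤ (2 + C) * D := by
    calc (1 + C) * t ≤ (1 + C) * D := mul_le_mul_of_nonneg_left htD (by linarith)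
      _ ≤ (2 + C) * D := mul_le_mul_of_nonneg_right (by linarith) hD0
  calc Metric.infDist θb S ≤ (1 + C) * t + 2 * (ε + a) / lam := hfinal
    _ ≤ (2 + C) * D + 2 * (ε + a) / lam := by linarith
end

section
/- Let E and F be normed vector spaces and equip E × F with the norm ‖(u, v)‖ = √(‖u‖² + ‖v‖²). Let H̃, Ĥ, F_N, K, V : E × F → ℝ, let θ̄ = (ū, v̄) and θ̃ = (ũ, ṽ) ∈ E × F, write θ' = (ũ, 0), and let c₂ > 0, ν > 1, a ≥ 0, ε ≥ 0, λ > 0, C ≥ 0. Assume: (i) H̃(θ̃) = 0, H̃(θ') = 0, H̃(θ̄) ≥ 0, and c₂‖θ̄ − θ̃‖^ν ≤ H̃(θ̄); (ii) |H̃(θ) − Ĥ(θ)| ≤ a and |F_N(θ) − Ĥ(θ)| ≤ ε for θ ∈ {θ̄, θ̃, θ'}; (iii) F_N(θ̄) + λ(K(θ̄) + V(θ̄)) ≤ F_N(θ) + λ(K(θ) + V(θ)) for θ ∈ {θ̃, θ'}; (iv) |K(θ̃) − K(θ̄)| ≤ C‖θ̃ − θ̄‖ and |(K + V)(θ̃)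 − (K + V)(θ̄)| ≤ C‖θ̃ − θ̄‖; (v) V(θ') = 0, K(θ') = K(θ̃), and ‖v̄‖ ≤ V(θ̄). Let S ⊆ E × F contain θ'. Then d(θ̄, S) ≤ (2 + C)·D + 2(ε + a)/λ, where D = ((2/c₂)·(2ε + 2a + C₀·λ^{ν/(ν−1)}))^{1/ν} and C₀ = ((ν−1)/ν)·C^{ν/(ν−1)}·(2/(c₂ν))^{1/(ν−1)}. -/
/-- Deterministic form of Theorem 3 (local feature selection at a party):
with the proxy objective `H̃` vanishing at `θ̃` and at its zeroed version
`θ' = (ũ, 0) ∈ S`, the Łojasiewicz inequality, approximation bounds,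
optimality of the local group-lasso minimizer `θ̄ = (ū, v̄)`, and Lipschitzness
of the regularizer `K + V`, one has `d(θ̄, S) ≤ (2 + C) D + 2(ε + a)/λ`. -/
theorem stmt_13 {E F : Type*} [NormedAddCommGroup E] [NormedSpace ℝ E]
    [NormedAddCommGroup F] [NormedSpace ℝ F]
    (Ht Hh FN K V : WithLp 2 (E × F) → ℝ)
    (ub ut : E) (vb vt : F)
    (θb θt θ' : WithLp 2 (E × F))
    (hθb : θb = (WithLp.equiv 2 (E × F)).symm (ub, vb))
    (hθt : θt = (WithLp.equiv 2 (E × F)).symm (ut, vt))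
    (hθ' : θ' = (WithLp.equiv 2 (E × F)).symm (ut, 0))
    (c₂ ν a ε lam C : ℝ)
    (hc₂ : 0 < c₂) (hν : 1 < ν) (ha : 0 ≤ a) (hε : 0 ≤ ε)
    (hlam : 0 < lam) (hC : 0 ≤ C)
    (h1a : Ht θt = 0) (h1b : Ht θ' = 0) (h1c : 0 ≤ Ht θb)
    (h1d : c₂ * ‖θb - θt‖ ^ ν ≤ Ht θb)
    (h2a : ∀ θ ∈ ({θb, θt, θ'} : Set (WithLp 2 (E × F))), |Ht θ - Hh θ| ≤ a)
    (h2b : ∀ θ ∈ ({θb, θt, θ'} : Set (WithLp 2 (E × F))), |FN θ - Hh θ| ≤ ε)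
    (h3 : ∀ θ ∈ ({θt, θ'} : Set (WithLp 2 (E × F))),
      FN θb + lam * (K θb + V θb) ≤ FN θ + lam * (K θ + V θ))
    (h4a : |K θt - K θb| ≤ C * ‖θt - θb‖)
    (h4b : |(K θt + V θt) - (K θb + V θb)| ≤ C * ‖θt - θb‖)
    (h5a : V θ' = 0) (h5b : K θ' = K θt) (h5c : ‖vb‖ ≤ V θb)
    (S : Set (WithLp 2 (E × F))) (hS : θ' ∈ S) :
    Metric.infDist θb S ≤
      (2 + C) *
        ((2 / c₂) * (2 * ε + 2 * a +
          ((ν - 1) / ν) * C ^ (ν / (ν - 1)) * (2 / (c₂ * ν)) ^ (1 / (ν - 1)) *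
            lam ^ (ν / (ν - 1)))) ^ (1 / ν) +
      2 * (ε + a) / lam := by
  have hν0 : (0:ℝ) < ν := lt_trans one_pos hν
  have hνne : ν ≠ 0 := ne_of_gt hν0
  set q : ℝ := ν / (ν - 1) with hq
  have hpq : ν.HolderConjugate q := Real.HolderConjugate.conjExponent hν
  set r : ℝ := ‖θb - θt‖ with hr
  have hr0 : 0 ≤ r := norm_nonneg _
  have hrrev : ‖θt - θb‖ = r := by rw [norm_sub_rev, hr]
  -- extract the pointwise bounds
  have hHtb := abs_le.1 (h2a θb (by simp))
  have hHtt := abs_le.1 (h2a θt (by simp))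
  have hHt' := abs_le.1 (h2a θ' (by simp))
  have hFNb := abs_le.1 (h2b θb (by simp))
  have hFNt := abs_le.1 (h2b θt (by simp))
  have hFN' := abs_le.1 (h2b θ' (by simp))
  have h3t := h3 θt (by simp)
  have h3' := h3 θ' (by simp)
  have h4a' := abs_le.1 h4a
  have h4b' := abs_le.1 h4b
  rw [hrrev] at h4a' h4b'
  -- Step A : Ht θb ≤ 2ε + 2a + lam * (C * r)
  have hregb : lam * (K θt + V θt) - lam * (K θb + V θb) ≤ lam * (C * r) := by
    rw [← mul_sub]
    exact mul_le_mul_of_nonneg_left h4b'.2 hlam.le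
  have hA : Ht θb ≤ 2 * ε + 2 * a + lam * (C * r) := by
    linarith [hHtb.2, hFNb.1, h3t, hFNt.2, hHtt.1]
  -- Step B : Young's inequality
  have hcν : (0:ℝ) < c₂ * ν := mul_pos hc₂ hν0
  set Ay : ℝ := (c₂ * ν / 2) ^ (1 / ν) with hAy
  set By : ℝ := (2 / (c₂ * ν)) ^ (1 / ν) with hBy
  have hA0 : 0 ≤ Ay := Real.rpow_nonneg (by positivity) _
  have hB0 : 0 ≤ By := Real.rpow_nonneg (by positivity) _
  have hAB : Ay * By = 1 := by
    rw [hAy, hBy, ← Real.mul_rpow (by positivity) (by positivity),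
      show c₂ * ν / 2 * (2 / (c₂ * ν)) = 1 by field_simp, Real.one_rpow]
  have hAν : Ay ^ ν = c₂ * ν / 2 := by
    rw [hAy, ← Real.rpow_mul (by positivity), one_div, inv_mul_cancel₀ hνne, Real.rpow_one]
  have hBq : By ^ q = (2 / (c₂ * ν)) ^ (1 / (ν - 1)) := by
    rw [hBy, ← Real.rpow_mul (by positivity)]
    congr 1
    rw [hq]
    field_simp
  have h1q : 1 / q = (ν - 1) / ν := by rw [hq, one_div_div]
  have hyoung : lam * (C * r) ≤ (c₂ / 2) * r ^ ν +
      (ν - 1) / ν * C ^ q * (2 / (c₂ * ν)) ^ (1 / (ν - 1)) * lam ^ q := by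
    have hy := Real.young_inequality_of_nonneg (mul_nonneg hA0 hr0)
      (by positivity : (0:ℝ) ≤ lam * C * By) hpq
    have e1 : Ay * r * (lam * C * By) = lam * (C * r) := by
      have : Ay * r * (lam * C * By) = lam * (C * r) * (Ay * By) := by ring
      rw [this, hAB, mul_one]
    have e2 : (Ay * r) ^ ν / ν = (c₂ / 2) * r ^ ν := by
      rw [Real.mul_rpow hA0 hr0, hAν]
      field_simp
    have e3 : (lam * C * By) ^ q / q =
        (ν - 1) / ν * C ^ q * (2 / (c₂ * ν)) ^ (1 / (ν - 1)) * lam ^ q := by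
      rw [Real.mul_rpow (by positivity) hB0, Real.mul_rpow hlam.le hC, hBq,
        div_eq_mul_one_div _ q, h1q]
      ring
    rw [e1, e2, e3] at hy
    exact hy
  -- Step C : r ≤ D
  set T : ℝ := 2 * ε + 2 * a +
      (ν - 1) / ν * C ^ q * (2 / (c₂ * ν)) ^ (1 / (ν - 1)) * lam ^ q with hT
  have hrν : (c₂ / 2) * r ^ ν ≤ T := by rw [hT]; linarith [h1d]
  have hrD : r ≤ ((2 / c₂) * T) ^ (1 / ν) := by
    have h1 : r ^ ν ≤ (2 / c₂) * T := by
      have h2 : (2 / c₂) * ((c₂ / 2) * r ^ ν) ≤ (2 / c₂) * T :=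
        mul_le_mul_of_nonneg_left hrν (by positivity)
      have h3 : (2 / c₂) * ((c₂ / 2) * r ^ ν) = r ^ ν := by
        field_simp
      linarith
    calc r = (r ^ ν) ^ (1 / ν) := by
          rw [← Real.rpow_mul hr0, mul_one_div, div_self hνne, Real.rpow_one]
      _ ≤ ((2 / c₂) * T) ^ (1 / ν) :=
          Real.rpow_le_rpow (Real.rpow_nonneg hr0 _) h1 (by positivity)
  -- Step D : bound on V θb
  have hKt : lam * K θt - lam * K θb ≤ lam * (C * r) := by
    rw [← mul_sub]
    exact mul_le_mul_of_nonneg_left h4a'.2 hlam.le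
  have hV : lam * V θb ≤ 2 * (a + ε) + lam * (C * r) := by
    rw [h5a, h5b] at h3'
    linarith [hFN'.2, hHt'.1, hFNb.1, hHtb.2]
  have hVb : V θb ≤ 2 * (ε + a) / lam + C * r := by
    have key : lam * (2 * (ε + a) / lam + C * r) = 2 * (a + ε) + lam * (C * r) := by
      field_simp
      ring
    have h2 : lam * V θb ≤ lam * (2 * (ε + a) / lam + C * r) := by rw [key]; exact hV
    exact le_of_mul_le_mul_left h2 hlam
  -- Step E : norm estimates
  have hn1 : ‖θt - θ'‖ = ‖vt‖ := by
    rw [hθt, hθ', WithLp.equiv_symm_apply, ← WithLp.toLp_sub, Prod.mk_sub_mk, sub_self, sub_zero,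
      WithLp.norm_toLp_snd]
  have hsndle : ∀ x : WithLp 2 (E × F), ‖x.snd‖ ≤ ‖x‖ := by
    intro x
    rw [WithLp.prod_norm_eq_of_L2]
    nth_rewrite 1 [← Real.sqrt_sq (norm_nonneg x.snd)]
    exact Real.sqrt_le_sqrt (le_add_of_nonneg_left (by positivity))
  have hsnd : ‖vt - vb‖ ≤ r := by
    have h := hsndle (θt - θb)
    rw [hθt, hθb, WithLp.equiv_symm_apply, ← WithLp.toLp_sub, Prod.mk_sub_mk] at h
    rw [WithLp.toLp_snd] at h
    rw [hrrev.symm, hθt, hθb]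
    exact h
  have hvt : ‖vt‖ ≤ ‖vt - vb‖ + ‖vb‖ := by
    simpa using norm_add_le (vt - vb) vb
  have hd : Metric.infDist θb S ≤ ‖θb - θ'‖ := by
    have h := Metric.infDist_le_dist_of_mem (x := θb) hS
    rwa [dist_eq_norm] at h
  have htri : ‖θb - θ'‖ ≤ r + ‖vt‖ := by
    have h := norm_sub_le_norm_sub_add_norm_sub θb θt θ'
    rw [hn1] at h
    exact h
  -- conclusion
  have hfin : Metric.infDist θb S ≤ (2 + C) * r + 2 * (ε + a) / lam := by
    linarith
  have hDle : (2 + C) * r ≤ (2 + C) * ((2 / c₂) * T) ^ (1 / ν) :=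
    mul_le_mul_of_nonneg_left hrD (by linarith)
  linarith
end
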